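/- arXiv:1011.2921 — 3 statements merged into one kernel-verified Lean document; each statement's English description precedes it below -/
import Mathlib

section
/- Let η_t be defined from (η₀, E, G) as in the explicit fluid representation: ⟨f, η_t⟩ = ∫_{[0,H)} f(x+t)(1-G(x+t))/(1-G(x)) dη₀(x) + ∫_{[0,t]} f(t-s)(1-G(t-s)) dE(s). Assume additionally: (i) for every x ≥ 0, if η₀({x}) > 0 then η₀((x, x+ε)) > 0 for all ε > 0; (ii) for every t ≥ 0, if E(t) - E(t-) > 0 then E(t-) - E(t-ε) > 0 for all ε ∈ (0,t); and (iii) G is continuous. Then for every t > 0 and L ∈ [0,H): if η_t({L}) > 0 then η_t((L, L+ε)) > 0 for all sufficiently small ε > 0. -/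
open MeasureTheory Set Filter Function
open scoped ENNReal Topology

/-!
An atom of `η_t` at `L` comes either from an atom of `η₀` at `L - t`, carried to `L` by the
shift `x ↦ x + t`, or from a jump of `E` at `t - L`, carried to `L` by the reflection
`s ↦ t - s`. In the first case (i) puts `η₀`-mass just to the right of `L - t`, which the shift
moves just to the right of `L`. In the second case `t - L > 0` because `E` vanishes on
`(-∞, 0]`, and (ii) puts `E`-mass just to the left of `t - L`, which the reflection moves just to
the right of `L`. The survival weights are positive below `H`, so none of this mass is lost.
-/

theorem setLIntegral_indicator_comp_mul_pos_iff {α β : Type*} [MeasurableSpace α]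
    [MeasurableSpace β] {μ : Measure α} {φ : α → β} {w : α → ℝ≥0∞} {S : Set α} {A : Set β}
    (hφ : Measurable φ) (hw : Measurable w) (hA : MeasurableSet A) :
    0 < ∫⁻ x in S, A.indicator (fun _ => (1 : ℝ≥0∞)) (φ x) * w x ∂μ ↔
      0 < μ (φ ⁻¹' A ∩ support w ∩ S) := by
  have hf : Measurable fun x => A.indicator (fun _ => (1 : ℝ≥0∞)) (φ x) * w x :=
    ((measurable_const.indicator hA).comp hφ).mul hw
  rw [setLIntegral_pos_iff hf]
  congr! 3
  ext x
  by_cases hx : φ x ∈ A <;> simp [hx]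

theorem mem_and_measure_singleton_pos_of_subset {α : Type*} [MeasurableSpace α]
    {μ : Measure α} {B : Set α} {a : α} (hB : 0 < μ B) (hBa : B ⊆ {a}) :
    a ∈ B ∧ 0 < μ {a} := by
  rcases subset_singleton_iff_eq.1 hBa with rfl | rfl
  · simp at hB
  · exact ⟨rfl, hB⟩

namespace StieltjesFunction

variable (E : StieltjesFunction ℝ)

theorem leftLim_lt_of_measure_singleton_pos {s : ℝ} (h : 0 < E.measure {s}) :
    leftLim E s < E s := by
  rw [measure_singleton, ENNReal.ofReal_pos] at h
  linarith

theorem measure_Ioo_pos_of_lt_leftLim {a b : ℝ} (h : E a < leftLim E b) :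
    0 < E.measure (Ioo a b) := by
  rw [measure_Ioo, ENNReal.ofReal_pos]
  linarith

theorem pos_of_measure_singleton_pos {E : StieltjesFunction ℝ} (hE0 : ∀ s ≤ 0, E s = 0)
    {s : ℝ} (h : 0 < E.measure {s}) : 0 < s := by
  have hIic : E.measure (Iic 0) = 0 := by
    have hlim : Tendsto E atBot (𝓝 0) :=
      tendsto_const_nhds.congr' <| eventuallyEq_of_mem (Iic_mem_atBot 0) fun s hs => (hE0 s hs).symm
    simp [E.measure_Iic hlim, hE0 0 le_rfl]
  by_contra! hs
  exact h.ne' (measure_mono_null (singleton_subset_iff.2 hs) hIic)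

end StieltjesFunction

section FluidTerms

variable {G : ℝ → ℝ} {Hr t L ε : ℝ}

noncomputable def initialTerm (G : ℝ → ℝ) (Hr : ℝ) (η₀ : Measure ℝ) (t : ℝ) (A : Set ℝ) :
    ℝ≥0∞ :=
  ∫⁻ x in Ico 0 Hr,
    A.indicator (fun _ => 1) (x + t) * ENNReal.ofReal ((1 - G (x + t)) / (1 - G x)) ∂η₀

noncomputable def arrivalTerm (G : ℝ → ℝ) (E : StieltjesFunction ℝ) (t : ℝ) (A : Set ℝ) :
    ℝ≥0∞ :=
  ∫⁻ s in Icc 0 t, A.indicator (fun _ => 1) (t - s) * ENNReal.ofReal (1 - G (t - s)) ∂E.measure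

theorem initialTerm_Ioo_pos {η₀ : Measure ℝ} (hGc : Continuous G)
    (hGlt : ∀ x, 0 ≤ x → x < Hr → G x < 1)
    (hi : ∀ x, 0 ≤ x → 0 < η₀ {x} → ∀ ε, 0 < ε → 0 < η₀ (Ioo x (x + ε)))
    (ht : 0 ≤ t) (h : 0 < initialTerm G Hr η₀ t {L}) (hε : 0 < ε) (hεL : L + ε ≤ Hr) :
    0 < initialTerm G Hr η₀ t (Ioo L (L + ε)) := by
  have hw : Measurable fun x => ENNReal.ofReal ((1 - G (x + t)) / (1 - G x)) := by fun_prop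
  rw [initialTerm, setLIntegral_indicator_comp_mul_pos_iff (measurable_add_const t) hw
    (measurableSet_singleton L)] at h
  rw [initialTerm, setLIntegral_indicator_comp_mul_pos_iff (measurable_add_const t) hw
    measurableSet_Ioo]
  obtain ⟨⟨-, hx0, -⟩, hatom⟩ :=
    mem_and_measure_singleton_pos_of_subset (a := L - t) h fun x hx => by
      simp only [mem_inter_iff, mem_preimage, mem_singleton_iff] at hx ⊢
      linarith [hx.1.1]
  refine (hi _ hx0 hatom ε hε).trans_le (measure_mono fun x ⟨hx1, hx2⟩ => ?_)
  have hx : 0 ≤ x ∧ x < Hr := ⟨by linarith, by linarith⟩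
  have hxt : 0 ≤ x + t ∧ x + t < Hr := ⟨by linarith, by linarith⟩
  have hratio : 0 < (1 - G (x + t)) / (1 - G x) :=
    div_pos (sub_pos.2 (hGlt _ hxt.1 hxt.2)) (sub_pos.2 (hGlt _ hx.1 hx.2))
  exact ⟨⟨show L < x + t ∧ x + t < L + ε from ⟨by linarith, by linarith⟩,
    (ENNReal.ofReal_pos.2 hratio).ne'⟩, hx⟩

variable {E : StieltjesFunction ℝ}

theorem measure_singleton_pos_of_arrivalTerm_pos (hGc : Continuous G)
    (h : 0 < arrivalTerm G E t {L}) : 0 < E.measure {t - L} := by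
  have hw : Measurable fun s => ENNReal.ofReal (1 - G (t - s)) := by fun_prop
  rw [arrivalTerm, setLIntegral_indicator_comp_mul_pos_iff (measurable_const_sub t) hw
    (measurableSet_singleton L)] at h
  refine (mem_and_measure_singleton_pos_of_subset h fun s hs => ?_).2
  simp only [mem_inter_iff, mem_preimage, mem_singleton_iff] at hs ⊢
  linarith [hs.1.1]

theorem arrivalTerm_Ioo_pos (hGc : Continuous G) (hGlt : ∀ x, 0 ≤ x → x < Hr → G x < 1)
    (hL : 0 ≤ L) (hεs : ε < t - L) (hεL : L + ε ≤ Hr)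
    (hmass : E (t - L - ε) < leftLim E (t - L)) :
    0 < arrivalTerm G E t (Ioo L (L + ε)) := by
  have hw : Measurable fun s => ENNReal.ofReal (1 - G (t - s)) := by fun_prop
  rw [arrivalTerm, setLIntegral_indicator_comp_mul_pos_iff (measurable_const_sub t) hw
    measurableSet_Ioo]
  refine (E.measure_Ioo_pos_of_lt_leftLim hmass).trans_le
    (measure_mono fun s ⟨hs1, hs2⟩ => ?_)
  have hts : 0 ≤ t - s ∧ t - s < Hr := ⟨by linarith, by linarith⟩
  exact ⟨⟨show L < t - s ∧ t - s < L + ε from ⟨by linarith, by linarith⟩,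
    (ENNReal.ofReal_pos.2 (sub_pos.2 (hGlt _ hts.1 hts.2))).ne'⟩, by linarith, by linarith⟩

end FluidTerms

theorem stmt_7_general (G : ℝ → ℝ) (hGc : Continuous G)
    (Hr : ℝ) (hGlt : ∀ x : ℝ, 0 ≤ x → x < Hr → G x < 1)
    (η₀ : Measure ℝ)
    (E : StieltjesFunction ℝ) (hE0 : ∀ s : ℝ, s ≤ 0 → E s = 0)
    (η : ℝ → Measure ℝ)
    (hη : ∀ t : ℝ, 0 ≤ t → ∀ A : Set ℝ, MeasurableSet A →
      η t A = (∫⁻ x in Set.Ico (0:ℝ) Hr,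
          Set.indicator A (fun _ => (1:ℝ≥0∞)) (x + t)
            * ENNReal.ofReal ((1 - G (x + t)) / (1 - G x)) ∂η₀)
        + ∫⁻ s in Set.Icc (0:ℝ) t,
            Set.indicator A (fun _ => (1:ℝ≥0∞)) (t - s)
              * ENNReal.ofReal (1 - G (t - s)) ∂E.measure)
    (hi : ∀ x : ℝ, 0 ≤ x → 0 < η₀ {x} → ∀ ε : ℝ, 0 < ε → 0 < η₀ (Set.Ioo x (x + ε)))
    (hii : ∀ t : ℝ, 0 ≤ t → Function.leftLim (fun s => E s) t < E t →
      ∀ ε : ℝ, 0 < ε → ε < t → E (t - ε) < Function.leftLim (fun s => E s) t) :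
    ∀ t : ℝ, 0 < t → ∀ L : ℝ, 0 ≤ L → L < Hr → 0 < η t {L} →
      ∃ ε₀ > 0, ∀ ε : ℝ, 0 < ε → ε ≤ ε₀ → 0 < η t (Set.Ioo L (L + ε)) := by
  intro t ht L hL hLH hpos
  have hη' (A : Set ℝ) (hA : MeasurableSet A) :
      η t A = initialTerm G Hr η₀ t A + arrivalTerm G E t A :=
    hη t ht.le A hA
  rw [hη' _ (measurableSet_singleton L)] at hpos
  rcases add_pos_iff.1 hpos with hinit | harr
  · refine ⟨Hr - L, sub_pos.2 hLH, fun ε hε hεle => ?_⟩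
    rw [hη' _ measurableSet_Ioo]
    exact (initialTerm_Ioo_pos hGc hGlt hi ht.le hinit hε (by linarith)).trans_le le_self_add
  · have hatom := measure_singleton_pos_of_arrivalTerm_pos hGc harr
    have hs₀ := StieltjesFunction.pos_of_measure_singleton_pos hE0 hatom
    have hjump := E.leftLim_lt_of_measure_singleton_pos hatom
    refine ⟨min (Hr - L) ((t - L) / 2), lt_min (by linarith) (by linarith),
      fun ε hε hεle => ?_⟩
    have hεs : ε < t - L := by linarith [min_le_right (Hr - L) ((t - L) / 2)]
    rw [hη' _ measurableSet_Ioo]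
    exact (arrivalTerm_Ioo_pos hGc hGlt hL hεs (by linarith [min_le_left (Hr - L) ((t - L) / 2)])
      (hii _ hs₀.le hjump ε hε hεs)).trans_le le_add_self

theorem stmt_7 (G : ℝ → ℝ) (hGc : Continuous G) (hGm : Monotone G)
    (hG0 : ∀ x, 0 ≤ G x) (hG1 : ∀ x, G x ≤ 1)
    (Hr : ℝ) (hGlt : ∀ x : ℝ, 0 ≤ x → x < Hr → G x < 1)
    (η₀ : Measure ℝ) [IsFiniteMeasure η₀]
    (E : StieltjesFunction ℝ) (hE0 : ∀ s : ℝ, s ≤ 0 → E s = 0)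
    (η : ℝ → Measure ℝ)
    (hη : ∀ t : ℝ, 0 ≤ t → ∀ A : Set ℝ, MeasurableSet A →
      η t A = (∫⁻ x in Set.Ico (0:ℝ) Hr,
          Set.indicator A (fun _ => (1:ℝ≥0∞)) (x + t)
            * ENNReal.ofReal ((1 - G (x + t)) / (1 - G x)) ∂η₀)
        + ∫⁻ s in Set.Icc (0:ℝ) t,
            Set.indicator A (fun _ => (1:ℝ≥0∞)) (t - s)
              * ENNReal.ofReal (1 - G (t - s)) ∂E.measure)
    (hi : ∀ x : ℝ, 0 ≤ x → 0 < η₀ {x} → ∀ ε : ℝ, 0 < ε → 0 < η₀ (Set.Ioo x (x + ε)))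
    (hii : ∀ t : ℝ, 0 ≤ t → Function.leftLim (fun s => E s) t < E t →
      ∀ ε : ℝ, 0 < ε → ε < t → E (t - ε) < Function.leftLim (fun s => E s) t) :
    ∀ t : ℝ, 0 < t → ∀ L : ℝ, 0 ≤ L → L < Hr → 0 < η t {L} →
      ∃ ε₀ > 0, ∀ ε : ℝ, 0 < ε → ε ≤ ε₀ → 0 < η t (Set.Ioo L (L + ε)) :=
  stmt_7_general G hGc Hr hGlt η₀ E hE0 η hη hi hii
end

section
/- Suppose X̄, K̄, R̄, Q̄, Ē : [0,∞) → ℝ satisfy: R̄ is continuous; Q̄(t) = [X̄(t) - 1]⁺; the mass balance Q̄(0) + Ē(t) = Q̄(t) + K̄(t) + R̄(t) for all t; the nonidling identity ⟨1, ν̄_t⟩ = min(X̄(t), 1); K̄(t) - K̄(s) = ⟨1, ν̄_t⟩ - ⟨1, ν̄_s⟩ + ∫_s^t D̄'(u) du where D̄' ≥ 0 is locally integrable; Ē is nondecreasing; and whenever Q̄ = 0 on an interval [a,b] one has R̄(b) = R̄(a). Then K̄ is nondecreasing. -/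
open MeasureTheory Set

theorem stmt_10 (X E K R D' Q νm : ℝ → ℝ)
    (hRcont : Continuous R)
    (hQ : ∀ t, Q t = max (X t - 1) 0)
    (hν : ∀ t, νm t = min (X t) 1)
    (hbal : ∀ t : ℝ, 0 ≤ t → Q 0 + E t = Q t + K t + R t)
    (hD'nn : ∀ u, 0 ≤ D' u)
    (hD'int : ∀ s t : ℝ, IntervalIntegrable D' volume s t)
    (hK : ∀ s t : ℝ, 0 ≤ s → s ≤ t → K t - K s = νm t - νm s + ∫ u in s..t, D' u)
    (hE : MonotoneOn E (Set.Ici 0))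
    (hX : ∀ t, 0 ≤ X t)
    (hR0 : ∀ a b : ℝ, 0 ≤ a → a ≤ b → (∀ u ∈ Set.Icc a b, Q u = 0) → R b = R a) :
    MonotoneOn K (Set.Ici 0) := by
  intro s hs t ht hst
  simp only [Set.mem_Ici] at hs ht
  have hint : ∀ a b : ℝ, a ≤ b → 0 ≤ ∫ u in a..b, D' u := fun a b hab =>
    intervalIntegral.integral_nonneg hab (fun u _ => hD'nn u)
  have hνle : ∀ u, νm u ≤ 1 := fun u => by rw [hν]; exact min_le_right _ _
  rcases le_or_gt 1 (X t) with hXt | hXt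
  · have h1 : K t - K s = νm t - νm s + ∫ u in s..t, D' u := hK s t hs hst
    have h2 : νm t = 1 := by rw [hν]; exact min_eq_right hXt
    nlinarith [hint s t hst, hνle s]
  · have hQt : Q t = 0 := by rw [hQ]; simp only [max_eq_right_iff]; linarith
    set S := {u : ℝ | u ∈ Icc s t ∧ 1 ≤ X u} with hS
    by_cases hne : S.Nonempty
    · have hbdd : BddAbove S := ⟨t, fun u hu => hu.1.2⟩
      set l := sSup S with hl
      obtain ⟨u0, hu0⟩ := hne
      have hne : S.Nonempty := ⟨u0, hu0⟩
      have hlt : l ≤ t := csSup_le hne (fun u hu => hu.1.2)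
      have hsl : s ≤ l := hu0.1.1.trans (le_csSup hbdd hu0)
      have h0l : 0 ≤ l := hs.trans hsl
      have hQzero : ∀ v, l < v → v ≤ t → Q v = 0 := by
        intro v hlv hvt
        have hv : v ∉ S := fun hvS => absurd (le_csSup hbdd hvS) (not_le.mpr hlv)
        have hXv : X v < 1 := by
          by_contra h
          exact hv ⟨⟨hsl.trans hlv.le, hvt⟩, not_lt.mp h⟩
        rw [hQ]; simp only [max_eq_right_iff]; linarith
      rcases le_or_gt 1 (X l) with hXl | hXl
      · have hltt : l < t := lt_of_le_of_ne hlt (fun h => by rw [h] at hXl; linarith)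
        have hRa : ∀ a ∈ Ioc l t, R a = R t := by
          intro a ha
          exact (hR0 a t (h0l.trans ha.1.le) ha.2
            (fun u hu => hQzero u (lt_of_lt_of_le ha.1 hu.1) hu.2)).symm
        have hRlt : R l = R t := by
          have h1 : Filter.Tendsto R (nhdsWithin l (Ioi l)) (nhds (R l)) :=
            (hRcont.tendsto l).mono_left nhdsWithin_le_nhds
          have h2 : Filter.Tendsto R (nhdsWithin l (Ioi l)) (nhds (R t)) := by
            apply Filter.Tendsto.congr' _ tendsto_const_nhds
            filter_upwards [Ioc_mem_nhdsGT_of_mem ⟨le_refl l, hltt⟩] with a ha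
            exact (hRa a ha).symm
          exact tendsto_nhds_unique h1 h2
        have hKls : K l - K s = νm l - νm s + ∫ u in s..l, D' u := hK s l hs hsl
        have hνl : νm l = 1 := by rw [hν]; exact min_eq_right hXl
        have hKl : K s ≤ K l := by nlinarith [hint s l hsl, hνle s]
        have hbl := hbal l h0l
        have hbt := hbal t ht
        have hQl : 0 ≤ Q l := by rw [hQ]; exact le_max_right _ _
        have hElt : E l ≤ E t := hE h0l ht hltt.le
        linarith
      · have hQl : Q l = 0 := by rw [hQ]; simp only [max_eq_right_iff]; linarith
        have hRlt : R t = R l := hR0 l t h0l hlt (by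
          intro u hu
          rcases eq_or_lt_of_le hu.1 with h | h
          · rw [← h]; exact hQl
          · exact hQzero u h hu.2)
        have key : ∀ ε > 0, K s ≤ K t + ε := by
          intro ε hε
          obtain ⟨δ, hδ, hball⟩ := Metric.continuous_iff.mp hRcont l ε hε
          have hlsub : l - δ < sSup S := by rw [← hl]; linarith
          obtain ⟨u, huS, hu⟩ := exists_lt_of_lt_csSup hne hlsub
          have hul : u ≤ l := le_csSup hbdd huS
          have hRu : |R u - R l| < ε := by
            have := hball u (by rw [Real.dist_eq, abs_lt]; constructor <;> linarith)
            rwa [Real.dist_eq] at this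
          have hKus : K u - K s = νm u - νm s + ∫ v in s..u, D' v := hK s u hs huS.1.1
          have hνu : νm u = 1 := by rw [hν]; exact min_eq_right huS.2
          have hKu : K s ≤ K u := by nlinarith [hint s u huS.1.1, hνle s]
          have hbu := hbal u (hs.trans huS.1.1)
          have hbt := hbal t ht
          have hQu : 0 ≤ Q u := by rw [hQ]; exact le_max_right _ _
          have hEu : E u ≤ E t := hE (hs.trans huS.1.1) ht huS.1.2
          have habs := abs_lt.mp hRu
          linarith
        exact le_of_forall_pos_le_add key
    · have hQzero : ∀ u ∈ Icc s t, Q u = 0 := by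
        intro u hu
        have hXu : X u < 1 := by
          by_contra h
          exact hne ⟨u, hu, not_lt.mp h⟩
        rw [hQ]; simp only [max_eq_right_iff]; linarith
      have hRst : R t = R s := hR0 s t hs hst hQzero
      have hQs : Q s = 0 := hQzero s ⟨le_refl s, hst⟩
      have hbs := hbal s hs
      have hbt := hbal t ht
      have hEst : E s ≤ E t := hE hs ht hst
      linarith
end

section
/- Suppose Q̄₁, Q̄₂, R̄₁, R̄₂ : [0,∞) → [0,∞) satisfy: R̄₁ + Q̄₁ = R̄₂ + Q̄₂ pointwise; R̄₁, R̄₂ are continuous with R̄_i(t) - R̄_i(s) = ∫_s^t φ(Q̄_i(v)) dv for a fixed nondecreasing measurable φ : [0,∞) → [0,∞); Q̄₁, Q̄₂ are càdlàg with Q̄₁(0) = Q̄₂(0). Then Q̄₁ = Q̄₂ and R̄₁ = R̄₂. -/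
/-! If `R₂ - R₁` were positive at some `t ≥ 0`, let `s` be the last point of `[0, t]` where it is
nonpositive. Conservation gives `R₂ - R₁ = Q₁ - Q₂`, so `Q₂ < Q₁` on `(s, t]`, and as `φ` is
monotone, `R₂` grows no faster than `R₁` there: `(R₂ - R₁) t ≤ (R₂ - R₁) s ≤ 0`, a contradiction.
By symmetry `R₁ = R₂`, hence `Q₁ = Q₂`. Càdlàg paths are measurable and locally bounded, so
`φ ∘ Qᵢ` is locally integrable and the two integrals can be compared. -/

open MeasureTheory Set Filter Topology

theorem tendsto_ceil_mul_div_nhdsGE (v : ℝ) :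
    Tendsto (fun n : ℕ => (⌈v * (n + 1)⌉ : ℝ) / (n + 1)) atTop (𝓝[≥] v) := by
  have hle : ∀ n : ℕ, v ≤ (⌈v * (n + 1)⌉ : ℝ) / (n + 1) := fun n => by
    rw [le_div_iff₀ (by positivity)]
    exact Int.le_ceil _
  have hlt : ∀ n : ℕ, (⌈v * (n + 1)⌉ : ℝ) / (n + 1) ≤ v + 1 / (n + 1) := fun n => by
    rw [div_le_iff₀ (by positivity), add_mul, one_div_mul_cancel (by positivity)]
    exact (Int.ceil_lt_add_one _).le
  refine tendsto_nhdsWithin_iff.2 ⟨?_, Eventually.of_forall hle⟩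
  refine tendsto_of_tendsto_of_tendsto_of_le_of_le tendsto_const_nhds ?_ hle hlt
  simpa using tendsto_const_nhds.add (tendsto_one_div_add_atTop_nhds_zero_nat (𝕜 := ℝ))

theorem measurable_of_continuousWithinAt_Ici {β : Type*} [TopologicalSpace β]
    [TopologicalSpace.PseudoMetrizableSpace β] [MeasurableSpace β] [BorelSpace β] {Q : ℝ → β}
    (hQ : ∀ x, ContinuousWithinAt Q (Ici x) x) : Measurable Q := by
  refine measurable_of_tendsto_metrizable
    (f := fun (n : ℕ) (v : ℝ) => Q ((⌈v * (n + 1)⌉ : ℝ) / (n + 1))) (fun n => ?_)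
    (tendsto_pi_nhds.2 fun v => (hQ v).tendsto.comp (tendsto_ceil_mul_div_nhdsGE v))
  exact (measurable_from_top (f := fun k : ℤ => Q (k / ((n : ℝ) + 1)))).comp
    (Int.measurable_ceil.comp (measurable_id.mul_const _))

theorem isBoundedUnder_norm_nhds_of_cadlag {E : Type*} [SeminormedAddGroup E] {Q : ℝ → E} {x : ℝ}
    (hrc : ContinuousWithinAt Q (Ici x) x) (hll : ∃ l, Tendsto Q (𝓝[<] x) (𝓝 l)) :
    IsBoundedUnder (· ≤ ·) (𝓝 x) (fun y => ‖Q y‖) := by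
  obtain ⟨l, hl⟩ := hll
  rw [← nhdsLT_sup_nhdsGE, IsBoundedUnder, map_sup]
  exact isBounded_sup hl.norm.isBoundedUnder_le hrc.tendsto.norm.isBoundedUnder_le

theorem Monotone.isBoundedUnder_norm_comp {α : Type*} {φ : ℝ → ℝ} (hφ : Monotone φ)
    {l : Filter α} {u : α → ℝ} (hu : IsBoundedUnder (· ≤ ·) l (fun a => ‖u a‖)) :
    IsBoundedUnder (· ≤ ·) l (fun a => ‖φ (u a)‖) := by
  simp only [Real.norm_eq_abs, isBoundedUnder_le_abs] at hu ⊢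
  exact ⟨hφ.isBoundedUnder_le_comp hu.1, hφ.isBoundedUnder_ge_comp hu.2⟩

theorem Monotone.locallyIntegrable_comp_of_cadlag {φ : ℝ → ℝ} (hφ : Monotone φ) {Q : ℝ → ℝ}
    (hrc : ∀ x, ContinuousWithinAt Q (Ici x) x) (hll : ∀ x, ∃ l, Tendsto Q (𝓝[<] x) (𝓝 l)) :
    LocallyIntegrable (fun v => φ (Q v)) := fun x =>
  (volume.finiteAt_nhds x).integrableAtFilter
    (StronglyMeasurable.stronglyMeasurableAtFilter
      (hφ.measurable.comp (measurable_of_continuousWithinAt_Ici hrc)).stronglyMeasurable)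
    (hφ.isBoundedUnder_norm_comp (isBoundedUnder_norm_nhds_of_cadlag (hrc x) (hll x)))

theorem Continuous.nonpos_of_le_of_pos_on_Ioc {D : ℝ → ℝ} (hD : Continuous D) {a : ℝ}
    (ha : D a ≤ 0) (hle : ∀ s t, a ≤ s → s < t → (∀ v ∈ Ioc s t, 0 < D v) → D t ≤ D s) :
    ∀ t, a ≤ t → D t ≤ 0 := by
  intro t hat
  by_contra! hDt
  set S := Icc a t ∩ D ⁻¹' Iic 0
  have hSne : S.Nonempty := ⟨a, ⟨le_rfl, hat⟩, ha⟩
  have hSbdd : BddAbove S := bddAbove_Icc.mono inter_subset_left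
  obtain ⟨⟨has, hst⟩, hDs⟩ : sSup S ∈ S :=
    (isClosed_Icc.inter (isClosed_Iic.preimage hD)).csSup_mem hSne hSbdd
  have hpos : ∀ v ∈ Ioc (sSup S) t, 0 < D v := fun v ⟨hsv, hvt⟩ => by
    by_contra! hDv
    exact (le_csSup hSbdd ⟨⟨has.trans hsv.le, hvt⟩, hDv⟩).not_gt hsv
  have hst' : sSup S < t := hst.lt_of_ne fun h => (h ▸ hDs : D t ≤ 0).not_gt hDt
  exact (hle _ _ has hst' hpos).not_gt (hDs.trans_lt hDt)

theorem le_of_add_eq_of_integral_monotone {φ : ℝ → ℝ} (hφ : Monotone φ) {Q₁ Q₂ R₁ R₂ : ℝ → ℝ}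
    (hcons : ∀ t : ℝ, 0 ≤ t → R₁ t + Q₁ t = R₂ t + Q₂ t)
    (hR₁c : Continuous R₁) (hR₂c : Continuous R₂)
    (hR₁ : ∀ s t : ℝ, 0 ≤ s → s ≤ t → R₁ t - R₁ s = ∫ v in s..t, φ (Q₁ v))
    (hR₂ : ∀ s t : ℝ, 0 ≤ s → s ≤ t → R₂ t - R₂ s = ∫ v in s..t, φ (Q₂ v))
    (hφQ₁ : LocallyIntegrable (fun v => φ (Q₁ v))) (hφQ₂ : LocallyIntegrable (fun v => φ (Q₂ v)))
    (h0 : Q₁ 0 = Q₂ 0) :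
    ∀ t : ℝ, 0 ≤ t → R₂ t ≤ R₁ t := by
  suffices hD : ∀ t, 0 ≤ t → R₂ t - R₁ t ≤ 0 from fun t ht => sub_nonpos.1 (hD t ht)
  refine Continuous.nonpos_of_le_of_pos_on_Ioc (D := fun v => R₂ v - R₁ v) (hR₂c.sub hR₁c)
    (by linarith [hcons 0 le_rfl]) fun s t hs hst hpos => ?_
  have hQ : ∀ v ∈ Ioo s t, φ (Q₂ v) ≤ φ (Q₁ v) := fun v hv =>
    hφ (by linarith [hpos v (Ioo_subset_Ioc_self hv), hcons v (hs.trans hv.1.le)])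
  have hmono := intervalIntegral.integral_mono_on_of_le_Ioo hst.le
    (hφQ₂.integrableOn_isCompact isCompact_uIcc).intervalIntegrable
    (hφQ₁.integrableOn_isCompact isCompact_uIcc).intervalIntegrable hQ
  linarith [hR₁ s t hs hst.le, hR₂ s t hs hst.le]

theorem stmt_18_general (φ : ℝ → ℝ) (hφm : Monotone φ)
    (Q₁ Q₂ R₁ R₂ : ℝ → ℝ)
    (hcons : ∀ t : ℝ, 0 ≤ t → R₁ t + Q₁ t = R₂ t + Q₂ t)
    (hR₁c : Continuous R₁) (hR₂c : Continuous R₂)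
    (hR₁ : ∀ s t : ℝ, 0 ≤ s → s ≤ t → R₁ t - R₁ s = ∫ v in s..t, φ (Q₁ v))
    (hR₂ : ∀ s t : ℝ, 0 ≤ s → s ≤ t → R₂ t - R₂ s = ∫ v in s..t, φ (Q₂ v))
    (hQ₁rc : ∀ x : ℝ, ContinuousWithinAt Q₁ (Set.Ici x) x)
    (hQ₂rc : ∀ x : ℝ, ContinuousWithinAt Q₂ (Set.Ici x) x)
    (hQ₁ll : ∀ x : ℝ, ∃ l, Tendsto Q₁ (nhdsWithin x (Set.Iio x)) (nhds l))
    (hQ₂ll : ∀ x : ℝ, ∃ l, Tendsto Q₂ (nhdsWithin x (Set.Iio x)) (nhds l))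
    (h0 : Q₁ 0 = Q₂ 0) :
    ∀ t : ℝ, 0 ≤ t → Q₁ t = Q₂ t ∧ R₁ t = R₂ t := by
  intro t ht
  have hφQ₁ := hφm.locallyIntegrable_comp_of_cadlag hQ₁rc hQ₁ll
  have hφQ₂ := hφm.locallyIntegrable_comp_of_cadlag hQ₂rc hQ₂ll
  have h₁ := le_of_add_eq_of_integral_monotone hφm hcons hR₁c hR₂c hR₁ hR₂ hφQ₁ hφQ₂ h0 t ht
  have h₂ := le_of_add_eq_of_integral_monotone hφm (fun v hv => (hcons v hv).symm) hR₂c hR₁c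
    hR₂ hR₁ hφQ₂ hφQ₁ h0.symm t ht
  have := hcons t ht
  exact ⟨by linarith, by linarith⟩

theorem stmt_18 (φ : ℝ → ℝ) (hφm : Monotone φ) (hφnn : ∀ q, 0 ≤ φ q)
    (Q₁ Q₂ R₁ R₂ : ℝ → ℝ)
    (hQ₁nn : ∀ t, 0 ≤ Q₁ t) (hQ₂nn : ∀ t, 0 ≤ Q₂ t)
    (hR₁nn : ∀ t, 0 ≤ R₁ t) (hR₂nn : ∀ t, 0 ≤ R₂ t)
    (hcons : ∀ t : ℝ, 0 ≤ t → R₁ t + Q₁ t = R₂ t + Q₂ t)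
    (hR₁c : Continuous R₁) (hR₂c : Continuous R₂)
    (hR₁ : ∀ s t : ℝ, 0 ≤ s → s ≤ t → R₁ t - R₁ s = ∫ v in s..t, φ (Q₁ v))
    (hR₂ : ∀ s t : ℝ, 0 ≤ s → s ≤ t → R₂ t - R₂ s = ∫ v in s..t, φ (Q₂ v))
    (hQ₁rc : ∀ x : ℝ, ContinuousWithinAt Q₁ (Set.Ici x) x)
    (hQ₂rc : ∀ x : ℝ, ContinuousWithinAt Q₂ (Set.Ici x) x)
    (hQ₁ll : ∀ x : ℝ, ∃ l, Tendsto Q₁ (nhdsWithin x (Set.Iio x)) (nhds l))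
    (hQ₂ll : ∀ x : ℝ, ∃ l, Tendsto Q₂ (nhdsWithin x (Set.Iio x)) (nhds l))
    (h0 : Q₁ 0 = Q₂ 0) :
    ∀ t : ℝ, 0 ≤ t → Q₁ t = Q₂ t ∧ R₁ t = R₂ t :=
  stmt_18_general φ hφm Q₁ Q₂ R₁ R₂ hcons hR₁c hR₂c hR₁ hR₂ hQ₁rc hQ₂rc hQ₁ll hQ₂ll h0
end
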